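/- Let C1 and C2 be two catenaries hanging from the same suspension points A = (xA, hA), B = (xB, hB), xA < xB, with C1(x) > C2(x) for all x ∈ (xA, xB). Then the arc length of C1 over [xA, xB] is strictly less than the arc length of C2. -/

import Mathlib

/-!
Arc length is the integral of the convex function `p ↦ √(1 + p ^ 2)` of the slope. Bounding it
for `C2` from below by its tangent line at the slope `sinh` of `C1`, whose own slope is `tanh`,
gives `L(C2) ≥ L(C1) + ∫ tanh · (C2 - C1)'`. Integrating by parts, the boundary terms vanish since
the curves share their endpoints, and the correction becomes `∫ tanh' · (C1 - C2)`, which is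
positive because `tanh` is strictly increasing and `C1 > C2` inside the interval.
-/

open Real Set MeasureTheory intervalIntegral

attribute [fun_prop] continuous_sinh continuous_cosh

theorem integral_mul_deriv_pos {w w' h h' : ℝ → ℝ} {a b : ℝ} (hab : a < b)
    (hw : ∀ x ∈ uIcc a b, HasDerivAt w (w' x) x) (hh : ∀ x ∈ uIcc a b, HasDerivAt h (h' x) x)
    (hw'_cont : ContinuousOn w' (uIcc a b)) (hh'_int : IntervalIntegrable h' volume a b)
    (hw'_pos : ∀ x ∈ Ioo a b, 0 < w' x) (ha : h a = 0) (hb : h b = 0)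
    (hh_neg : ∀ x ∈ Ioo a b, h x < 0) :
    0 < ∫ x in a..b, w x * h' x := by
  have hh_cont : ContinuousOn h (uIcc a b) :=
    fun x hx ↦ (hh x hx).continuousAt.continuousWithinAt
  rw [integral_mul_deriv_eq_deriv_mul hw hh hw'_cont.intervalIntegrable hh'_int, ha, hb,
    mul_zero, mul_zero, sub_zero, zero_sub, ← intervalIntegral.integral_neg]
  refine intervalIntegral_pos_of_pos_on ?_ (fun x hx ↦ ?_) hab
  · exact (hw'_cont.intervalIntegrable.mul_continuousOn hh_cont).neg
  · simpa using mul_pos (hw'_pos x hx) (neg_pos.2 (hh_neg x hx))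

theorem one_add_mul_le_sqrt_mul_sqrt (p q : ℝ) : 1 + p * q ≤ √(1 + p ^ 2) * √(1 + q ^ 2) := by
  rw [← sqrt_mul (by positivity)]
  exact le_sqrt_of_sq_le (by nlinarith [sq_nonneg (p - q)])

theorem Real.sqrt_one_add_sinh_sq (t : ℝ) : √(1 + sinh t ^ 2) = cosh t := by
  rw [← cosh_sq', sqrt_sq (cosh_pos t).le]

/-- The tangent line of the convex function `p ↦ √(1 + p ^ 2)` at `p = sinh t`. -/
theorem Real.cosh_add_tanh_mul_sub_le (t q : ℝ) :
    cosh t + tanh t * (q - sinh t) ≤ √(1 + q ^ 2) := by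
  have hc := cosh_pos t
  have key : cosh t + tanh t * (q - sinh t) = (1 + sinh t * q) / cosh t := by
    rw [tanh_eq_sinh_div_cosh, eq_div_iff hc.ne']
    field_simp
    linear_combination cosh_sq_sub_sinh_sq t
  rw [key, div_le_iff₀ hc, mul_comm _ (cosh t), ← sqrt_one_add_sinh_sq]
  exact one_add_mul_le_sqrt_mul_sqrt _ _

theorem Real.hasDerivAt_tanh (t : ℝ) : HasDerivAt tanh ((cosh t ^ 2)⁻¹) t := by
  have h := (hasDerivAt_sinh t).div (hasDerivAt_cosh t) (cosh_pos t).ne'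
  rw [← sq, ← sq, cosh_sq_sub_sinh_sq, one_div] at h
  rwa [show tanh = fun x ↦ sinh x / cosh x from funext tanh_eq_sinh_div_cosh]

@[fun_prop]
theorem Real.continuous_tanh : Continuous tanh :=
  continuous_iff_continuousAt.2 fun t ↦ (hasDerivAt_tanh t).continuousAt

theorem hasDerivAt_sub_div_const (a x₀ x : ℝ) : HasDerivAt (fun x ↦ (x - x₀) / a) a⁻¹ x := by
  simpa using ((hasDerivAt_id x).sub_const x₀).div_const a

noncomputable def catenary (a x₀ y₀ x : ℝ) : ℝ := a * cosh ((x - x₀) / a) + y₀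

theorem hasDerivAt_catenary {a : ℝ} (ha : a ≠ 0) (x₀ y₀ x : ℝ) :
    HasDerivAt (catenary a x₀ y₀) (sinh ((x - x₀) / a)) x := by
  have h := ((hasDerivAt_sub_div_const a x₀ x).cosh.const_mul a).add_const y₀
  rwa [mul_comm _ a⁻¹, ← mul_assoc, mul_inv_cancel₀ ha, one_mul] at h

theorem higher_catenary_shorter_length
    (a1 x01 y01 a2 x02 y02 xA xB hA hB : ℝ)
    (ha1 : 0 < a1) (ha2 : 0 < a2) (hx : xA < xB)
    (C1 C2 : ℝ → ℝ)
    (hC1 : ∀ x, C1 x = a1 * Real.cosh ((x - x01) / a1) + y01)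
    (hC2 : ∀ x, C2 x = a2 * Real.cosh ((x - x02) / a2) + y02)
    (hA1 : C1 xA = hA) (hA2 : C2 xA = hA)
    (hB1 : C1 xB = hB) (hB2 : C2 xB = hB)
    (hgt : ∀ x ∈ Set.Ioo xA xB, C2 x < C1 x) :
    (∫ x in xA..xB, Real.sqrt (1 + deriv C1 x ^ 2)) <
      ∫ x in xA..xB, Real.sqrt (1 + deriv C2 x ^ 2) := by
  obtain rfl : C1 = catenary a1 x01 y01 := funext hC1
  obtain rfl : C2 = catenary a2 x02 y02 := funext hC2
  set t : ℝ → ℝ := fun x ↦ (x - x01) / a1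
  set s₂ : ℝ → ℝ := fun x ↦ sinh ((x - x02) / a2)
  have hC1' x : HasDerivAt (catenary a1 x01 y01) (sinh (t x)) x :=
    hasDerivAt_catenary ha1.ne' _ _ x
  have hC2' x : HasDerivAt (catenary a2 x02 y02) (s₂ x) x := hasDerivAt_catenary ha2.ne' _ _ x
  have hw x : HasDerivAt (fun x ↦ tanh (t x)) ((cosh (t x) ^ 2)⁻¹ * a1⁻¹) x :=
    (hasDerivAt_tanh _).comp x (hasDerivAt_sub_div_const a1 x01 x)
  have hcont (f : ℝ → ℝ) (hf : Continuous f) : IntervalIntegrable f volume xA xB :=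
    hf.intervalIntegrable _ _
  have hgain : 0 < ∫ x in xA..xB, tanh (t x) * (s₂ x - sinh (t x)) :=
    integral_mul_deriv_pos hx (fun x _ ↦ hw x) (fun x _ ↦ (hC2' x).sub (hC1' x))
      (by fun_prop (disch := intros; positivity)) (hcont _ (by fun_prop))
      (fun x _ ↦ by positivity) (by rw [Pi.sub_apply, hA1, hA2, sub_self])
      (by rw [Pi.sub_apply, hB1, hB2, sub_self]) (fun x hx ↦ sub_neg.2 (hgt x hx))
  simp only [fun x ↦ (hC1' x).deriv, fun x ↦ (hC2' x).deriv, sqrt_one_add_sinh_sq]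
  calc ∫ x in xA..xB, cosh (t x)
      < (∫ x in xA..xB, cosh (t x)) + ∫ x in xA..xB, tanh (t x) * (s₂ x - sinh (t x)) :=
        lt_add_of_pos_right _ hgain
    _ = ∫ x in xA..xB, cosh (t x) + tanh (t x) * (s₂ x - sinh (t x)) :=
        (intervalIntegral.integral_add (hcont _ (by fun_prop)) (hcont _ (by fun_prop))).symm
    _ ≤ ∫ x in xA..xB, √(1 + s₂ x ^ 2) :=
        integral_mono_on hx.le (hcont _ (by fun_prop)) (hcont _ (by fun_prop))
          fun x _ ↦ cosh_add_tanh_mul_sub_le _ _
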